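/- Let G be an n-vertex graph with α(G) = s−1+m for some 1 ≤ m ≤ t, where s > ⌊(n−t+1)/2⌋. Then there exist t vertices v₁,…,v_t such that α(G \ {v₁,…,v_t}) ≤ s−1. -/

import Mathlib

open SimpleGraph Set

/-- The independence number of `G` restricted to a vertex subset `A`:
the largest cardinality of a finite set of vertices inside `A` that is
pairwise non-adjacent in `G`. -/
noncomputable def indepNumOn {V : Type*} (G : SimpleGraph V) (A : Set V) : ℕ :=
  sSup {n | ∃ s : Finset V, ↑s ⊆ A ∧ s.card = n ∧
    ∀ x ∈ s, ∀ y ∈ s, x ≠ y → ¬ G.Adj x y}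

/-- The independence number of `G`. -/
noncomputable def indepNum {V : Type*} (G : SimpleGraph V) : ℕ :=
  indepNumOn G Set.univ

/-- `G` is `(k, l)`-stable: removing any `k` vertices decreases the
independence number by at most `l`. -/
def IsStable {V : Type*} (G : SimpleGraph V) (k l : ℕ) : Prop :=
  ∀ S : Finset V, S.card = k → _root_.indepNum G ≤ indepNumOn G (↑S : Set V)ᶜ + l

/-!
Suppose every deletion of `t` vertices from `W` leaves independence number at least `s`, while
`α(W) < s + t`. Delete vertices one at a time, each time one whose removal lowers `α`; this is
possible as long as some vertex lies in every maximum independent set. When no such vertex exists,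
Hajnal's lemma (via `|⋂ Iᵢ| + |⋃ Iᵢ| ≥ 2α` for maximum independent sets `Iᵢ`) gives
`|W| ≥ 2α(W)`. Either way `|W| + 1 ≥ 2s + t`, i.e. `α(G) ≤ ⌊(n - t + 1)/2⌋ + l` for
`(t, l)`-stable `G` with `l < t`, and the theorem is the case `l = m - 1`.
-/

open Finset

section

variable {V : Type*} {G : SimpleGraph V}

section Finite

variable [Finite V] {A B : Set V}

lemma bddAbove_indepNumOn_set (G : SimpleGraph V) (A : Set V) :
    BddAbove {n | ∃ s : Finset V, ↑s ⊆ A ∧ s.card = n ∧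
      ∀ x ∈ s, ∀ y ∈ s, x ≠ y → ¬ G.Adj x y} := by
  have := Fintype.ofFinite V
  exact ⟨Fintype.card V, fun _ ⟨s, _, hs, _⟩ => hs ▸ s.card_le_univ⟩

lemma exists_isIndepSet_card_eq_indepNumOn (G : SimpleGraph V) (A : Set V) :
    ∃ J : Finset V, ↑J ⊆ A ∧ G.IsIndepSet ↑J ∧ #J = indepNumOn G A := by
  obtain ⟨J, hJA, hJ, hJind⟩ :=
    Nat.sSup_mem (by exact ⟨0, ∅, by simp⟩) (bddAbove_indepNumOn_set G A)
  exact ⟨J, hJA, fun x hx y hy => hJind x hx y hy, hJ⟩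

lemma SimpleGraph.IsIndepSet.card_le_indepNumOn {J : Finset V} (hJ : G.IsIndepSet ↑J)
    (hJA : ↑J ⊆ A) : #J ≤ indepNumOn G A :=
  le_csSup (bddAbove_indepNumOn_set G A) ⟨J, hJA, rfl, fun _ hx _ hy => hJ hx hy⟩

lemma indepNumOn_mono (h : A ⊆ B) : indepNumOn G A ≤ indepNumOn G B := by
  obtain ⟨J, hJA, hJ, hJcard⟩ := exists_isIndepSet_card_eq_indepNumOn G A
  exact hJcard ▸ hJ.card_le_indepNumOn (hJA.trans h)

variable [DecidableEq V]

/-- Exchange step: the vertices of `I` adjacent to `A` can be traded for `A \ I`,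
so by maximality of `I` there are at least `#(A \ I)` of them, and none lies in `U`. -/
lemma card_sdiff_le_card_sdiff_of_isIndepSet {W I A U : Finset V} (hIW : I ⊆ W)
    (hI : G.IsIndepSet ↑I) (hImax : indepNumOn G ↑W ≤ #I) (hAW : A ⊆ W)
    (hA : G.IsIndepSet ↑A) (hAU : ∀ a ∈ A, ∀ u ∈ U, ¬ G.Adj a u) :
    #(A \ I) ≤ #(I \ U) := by
  classical
  set N := I.filter fun x => ∃ a ∈ A, G.Adj a x
  have hNI : N ⊆ I := filter_subset _ _
  have hNU : N ⊆ I \ U := fun x hx => by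
    obtain ⟨hxI, a, ha, hax⟩ := mem_filter.1 hx
    exact mem_sdiff.2 ⟨hxI, fun hxU => hAU a ha x hxU hax⟩
  have hexch : G.IsIndepSet ↑((I \ N) ∪ A) := by
    rw [coe_union, IsIndepSet, Set.pairwise_union]
    refine ⟨hI.mono (by simp), hA, fun x hx a ha _ => ?_⟩
    have hx := mem_sdiff.1 hx
    have hxa : ¬ G.Adj a x := fun hax => hx.2 (mem_filter.2 ⟨hx.1, a, ha, hax⟩)
    exact ⟨fun h => hxa h.symm, hxa⟩
  have : #(I \ N) + #(A \ I) ≤ #(I \ N) + #N :=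
    calc #(I \ N) + #(A \ I) = #((I \ N) ∪ (A \ I)) :=
          (card_union_of_disjoint (disjoint_sdiff.mono_left sdiff_subset)).symm
      _ ≤ #((I \ N) ∪ A) := card_le_card (union_subset_union_right sdiff_subset)
      _ ≤ indepNumOn G ↑W :=
          hexch.card_le_indepNumOn (coe_subset.2 (union_subset (sdiff_subset.trans hIW) hAW))
      _ ≤ #(I \ N) + #N := by rwa [card_sdiff_add_card_eq_card hNI]
  exact (Nat.le_of_add_le_add_left this).trans (card_le_card hNU)

lemma two_mul_indepNumOn_le_card_inf'_add_card_sup' {ι : Type*} {W : Finset V}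
    (f : ι → Finset V) (hfW : ∀ i, f i ⊆ W) (hf : ∀ i, G.IsIndepSet ↑(f i))
    (hfcard : ∀ i, #(f i) = indepNumOn G ↑W) {T : Finset ι} (hT : T.Nonempty) :
    2 * indepNumOn G ↑W ≤ #(T.inf' hT f) + #(T.sup' hT f) := by
  induction hT using Finset.Nonempty.cons_induction with
  | singleton i => simp [hfcard i]; omega
  | cons i T hiT hT ih =>
    rw [inf'_cons (H := hT), sup'_cons (H := hT)]
    set A := T.inf' hT f
    set U := T.sup' hT f
    change 2 * _ ≤ #(f i ∩ A) + #(f i ∪ U)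
    have ⟨j, hj⟩ := hT
    have hA : G.IsIndepSet ↑A := (hf j).mono (coe_subset.2 (inf'_le f hj))
    have hAU : ∀ a ∈ A, ∀ u ∈ U, ¬ G.Adj a u := by
      intro a ha u hu
      obtain ⟨k, hk, huk⟩ := mem_sup.1 ((sup'_eq_sup hT f).subst (motive := (u ∈ ·)) hu)
      have hak : a ∈ f k := inf'_le f hk ha
      exact fun hau => hf k hak huk (G.ne_of_adj hau) hau
    have hexch := card_sdiff_le_card_sdiff_of_isIndepSet (A := A) (hfW i) (hf i) (hfcard i).ge
      ((inf'_le f hj).trans (hfW j)) hA hAU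
    have := card_inter_add_card_sdiff A (f i)
    have := card_sdiff_add_card (f i) U
    rw [Finset.inter_comm]
    omega

/-- Hajnal's lemma. -/
theorem two_mul_indepNumOn_le_card (W : Finset V)
    (h : ∀ v ∈ W, ∃ J ⊆ W, G.IsIndepSet ↑J ∧ #J = indepNumOn G ↑W ∧ v ∉ J) :
    2 * indepNumOn G ↑W ≤ #W := by
  rcases W.eq_empty_or_nonempty with rfl | hW
  · obtain ⟨J, hJ, -, hJcard⟩ := exists_isIndepSet_card_eq_indepNumOn G ↑(∅ : Finset V)
    rw [← hJcard, subset_empty.1 (coe_subset.1 hJ)]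
    simp
  choose f hfW hf hfcard hvf using fun v : W => h v v.2
  have hinf : (univ : Finset W).inf' (univ_nonempty_iff.2 hW.to_subtype) f = ∅ := by
    refine eq_empty_of_forall_notMem fun x hx => ?_
    obtain ⟨v, hv⟩ := hW
    have hxW : x ∈ W := hfW ⟨v, hv⟩ (inf'_le f (mem_univ _) hx)
    exact hvf ⟨x, hxW⟩ (inf'_le f (mem_univ _) hx)
  have hsup : (univ : Finset W).sup' (univ_nonempty_iff.2 hW.to_subtype) f ⊆ W :=
    sup'_le _ _ fun i _ => hfW i
  have := two_mul_indepNumOn_le_card_inf'_add_card_sup' f hfW hf hfcard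
    (univ_nonempty_iff.2 hW.to_subtype)
  rw [hinf, Finset.card_empty, zero_add] at this
  exact this.trans (card_le_card hsup)

theorem two_mul_indepNumOn_le_card_or_exists_indepNumOn_erase_lt (W : Finset V) :
    2 * indepNumOn G ↑W ≤ #W ∨ ∃ v ∈ W, indepNumOn G ↑(W.erase v) < indepNumOn G ↑W := by
  by_cases h : ∀ v ∈ W, ∃ J ⊆ W, G.IsIndepSet ↑J ∧ #J = indepNumOn G ↑W ∧ v ∉ J
  · exact .inl (two_mul_indepNumOn_le_card W h)
  push Not at h
  obtain ⟨v, hv, hvmax⟩ := h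
  obtain ⟨J, hJ, hJind, hJcard⟩ := exists_isIndepSet_card_eq_indepNumOn G ↑(W.erase v)
  have hJW : J ⊆ W := (coe_subset.1 hJ).trans (erase_subset v W)
  refine .inr ⟨v, hv, hJcard ▸ (hJind.card_le_indepNumOn (coe_subset.2 hJW)).lt_of_ne ?_⟩
  exact fun hJmax => notMem_erase v W (coe_subset.1 hJ (hvmax J hJW hJind hJmax))

theorem two_mul_add_le_card_add_one_of_le_indepNumOn_sdiff {W : Finset V} {s t : ℕ}
    (ht : t ≤ #W) (hα : indepNumOn G ↑W < s + t)
    (hstable : ∀ S ⊆ W, #S = t → s ≤ indepNumOn G ↑(W \ S)) :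
    2 * s + t ≤ #W + 1 := by
  induction t generalizing W with
  | zero =>
    have := hstable ∅ (empty_subset W) rfl
    rw [Finset.sdiff_empty] at this
    omega
  | succ t ih =>
    have hdrop : 2 * (s + t) ≤ #W ∨ ∃ v ∈ W, indepNumOn G ↑(W.erase v) < s + t := by
      rcases (show indepNumOn G ↑W ≤ s + t by omega).lt_or_eq with hlt | heq
      · obtain ⟨v, hv⟩ := card_pos.1 (by omega : 0 < #W)
        exact .inr ⟨v, hv, (indepNumOn_mono (coe_subset.2 (erase_subset v W))).trans_lt hlt⟩
      · rw [← heq]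
        exact two_mul_indepNumOn_le_card_or_exists_indepNumOn_erase_lt W
    rcases hdrop with hW | ⟨v, hv, hlt⟩
    · omega
    have hstable' : ∀ S ⊆ W.erase v, #S = t → s ≤ indepNumOn G ↑(W.erase v \ S) := by
      intro S hS hScard
      have hvS : v ∉ S := fun h => notMem_erase v W (hS h)
      rw [erase_sdiff_comm, ← sdiff_insert]
      exact hstable _ (insert_subset hv (hS.trans (erase_subset v W)))
        (by rw [card_insert_of_notMem hvS, hScard])
    have := ih (by rw [card_erase_of_mem hv]; omega) hlt hstable'
    rw [card_erase_of_mem hv] at this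
    omega

end Finite

theorem indepNum_le_of_isStable [Fintype V] {t l : ℕ} (hG : IsStable G t l) (hlt : l < t)
    (ht : t ≤ Fintype.card V) : _root_.indepNum G ≤ (Fintype.card V - t + 1) / 2 + l := by
  classical
  have hbound := two_mul_add_le_card_add_one_of_le_indepNumOn_sdiff (G := G) (W := univ)
    (s := _root_.indepNum G - l) (t := t) ht
    (by rw [coe_univ]; change _root_.indepNum G < _; omega)
    (fun S _ hS => by
      rw [← Finset.compl_eq_univ_sdiff, coe_compl]
      have := hG S hS
      omega)
  rw [card_univ] at hbound
  omega

end

theorem exists_drop_to_s_sub_one_general {V : Type*} [Fintype V] (G : SimpleGraph V)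
    (n s t m : ℕ) (hn : Fintype.card V = n) (hm : 1 ≤ m) (hmt : m ≤ t)
    (htn : t ≤ n) (hslb : (n - t + 1) / 2 < s) (halpha : _root_.indepNum G = s - 1 + m) :
    ∃ S : Finset V, S.card = t ∧ indepNumOn G (↑S : Set V)ᶜ ≤ s - 1 := by
  by_contra! h
  have hstable : IsStable G t (m - 1) := fun S hS => by
    have := h S hS
    omega
  have := indepNum_le_of_isStable hstable (by omega) (hn ▸ htn)
  omega

theorem exists_drop_to_s_sub_one {V : Type*} [Fintype V] (G : SimpleGraph V)
    (n s t m : ℕ) (hn : Fintype.card V = n) (hs : 1 ≤ s) (hm : 1 ≤ m) (hmt : m ≤ t)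
    (htn : t ≤ n) (hslb : (n - t + 1) / 2 < s) (halpha : _root_.indepNum G = s - 1 + m) :
    ∃ S : Finset V, S.card = t ∧ indepNumOn G (↑S : Set V)ᶜ ≤ s - 1 :=
  exists_drop_to_s_sub_one_general G n s t m hn hm hmt htn hslb halpha
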